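/- With $|z|_\infty := \max(|t|^{1/2}, |x|^{1/3}, |v|)$ for $z = (t,x,v) \in \mathbb{R}^{1+2d}$ and $d_{\mathrm{kin}}$ the kinetic distance, one has for all $z_1, z_2$: $\frac{1}{2}|z_2^{-1} \circ z_1|_\infty \le d_{\mathrm{kin}}(z_1, z_2) \le |z_2^{-1} \circ z_1|_\infty$. -/
import Mathlib


/-- A point of the kinetic phase space `ℝ × ℝᵈ × ℝᵈ` (time, position, velocity). -/
abbrev KPt (d : ℕ) := ℝ × EuclideanSpace ℝ (Fin d) × EuclideanSpace ℝ (Fin d)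

/-- The Galilean group operation `z₀ ∘ z = (t₀ + t, x₀ + x + t v₀, v₀ + v)`. -/
noncomputable def kOp {d : ℕ} (z₀ z : KPt d) : KPt d :=
  (z₀.1 + z.1, z₀.2.1 + z.2.1 + z.1 • z₀.2.2, z₀.2.2 + z.2.2)

/-- The Galilean inverse `z⁻¹ = (-t, -x + t v, -v)`. -/
noncomputable def kInv {d : ℕ} (z : KPt d) : KPt d :=
  (-z.1, -z.2.1 + z.1 • z.2.2, -z.2.2)

/-- The kinetic cylinder `Q_r = (-r², 0] × B_{r³} × B_r` centered at the origin. -/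
def kCyl (d : ℕ) (r : ℝ) : Set (KPt d) :=
  Set.Ioc (-r ^ 2) 0 ×ˢ Metric.ball 0 (r ^ 3) ×ˢ Metric.ball 0 r

/-- The kinetic cylinder `Q_r(z₀) = {z₀ ∘ ζ : ζ ∈ Q_r}` centered at `z₀`. -/
def kCylAt {d : ℕ} (z₀ : KPt d) (r : ℝ) : Set (KPt d) := kOp z₀ '' kCyl d r

/-- The kinetic distance: the infimum of the radii `r > 0` such that both points belong
to a common kinetic cylinder `Q_r(z)`. -/
noncomputable def kdist {d : ℕ} (z₁ z₂ : KPt d) : ℝ :=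
  sInf {r : ℝ | 0 < r ∧ ∃ z : KPt d, z₁ ∈ kCylAt z r ∧ z₂ ∈ kCylAt z r}

/-- The kinetic sup-norm `|z|_∞ = max(|t|^{1/2}, |x|^{1/3}, |v|)`. -/
noncomputable def kNorm {d : ℕ} (z : KPt d) : ℝ :=
  max (|z.1| ^ ((1 : ℝ) / 2)) (max (‖z.2.1‖ ^ ((1 : ℝ) / 3)) ‖z.2.2‖)

lemma aux_rpow_le {a r : ℝ} (n : ℕ) (hn : n ≠ 0) (ha : 0 ≤ a) (hr : 0 ≤ r)
    (h : a ≤ r ^ n) : a ^ ((1:ℝ)/n) ≤ r := by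
  have hn' : (0:ℝ) < n := by exact_mod_cast Nat.pos_of_ne_zero hn
  calc a ^ ((1:ℝ)/n) ≤ (r ^ n) ^ ((1:ℝ)/n) :=
        Real.rpow_le_rpow ha h (by positivity)
    _ = r := by
        rw [← Real.rpow_natCast r n, ← Real.rpow_mul hr]
        rw [mul_one_div, div_self (ne_of_gt hn'), Real.rpow_one]

lemma aux_rpow_lt {a r : ℝ} (n : ℕ) (hn : n ≠ 0) (ha : 0 ≤ a)
    (h : a ^ ((1:ℝ)/n) < r) : a < r ^ n := by
  have hn' : (0:ℝ) < n := by exact_mod_cast Nat.pos_of_ne_zero hn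
  have h0 : 0 ≤ a ^ ((1:ℝ)/n) := Real.rpow_nonneg ha _
  have h2 : (a ^ ((1:ℝ)/n)) ^ n < r ^ n := pow_lt_pow_left₀ h h0 hn
  calc a = (a ^ ((1:ℝ)/n)) ^ n := by
        rw [← Real.rpow_natCast (a ^ ((1:ℝ)/n)) n, ← Real.rpow_mul ha]
        rw [one_div, inv_mul_cancel₀ (ne_of_gt hn'), Real.rpow_one]
    _ < r ^ n := h2

/-- Upper and lower bounds for the kinetic distance in terms of the kinetic sup-norm. -/
theorem stmt15 {d : ℕ} (z₁ z₂ : KPt d) :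
    (1 / 2 : ℝ) * kNorm (kOp (kInv z₂) z₁) ≤ kdist z₁ z₂ ∧
      kdist z₁ z₂ ≤ kNorm (kOp (kInv z₂) z₁) := by
  obtain ⟨t₁, x₁, v₁⟩ := z₁
  obtain ⟨t₂, x₂, v₂⟩ := z₂
  have h1 : kOp (kInv (t₂, x₂, v₂)) (t₁, x₁, v₁)
      = (t₁ - t₂, x₁ - x₂ - (t₁ - t₂) • v₂, v₁ - v₂) := by
    simp only [kOp, kInv, Prod.mk.injEq]
    refine ⟨by ring, by module, by module⟩
  rw [h1]
  set N : ℝ := kNorm (t₁ - t₂, x₁ - x₂ - (t₁ - t₂) • v₂, v₁ - v₂) with hN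
  have hNval : N = max (|t₁ - t₂| ^ ((1:ℝ)/2))
      (max (‖x₁ - x₂ - (t₁ - t₂) • v₂‖ ^ ((1:ℝ)/3)) ‖v₁ - v₂‖) := rfl
  have hN0 : 0 ≤ N := le_trans (Real.rpow_nonneg (abs_nonneg _) _) (le_max_left _ _)
  set S : Set ℝ := {r : ℝ | 0 < r ∧ ∃ z : KPt d,
      (t₁, x₁, v₁) ∈ kCylAt z r ∧ (t₂, x₂, v₂) ∈ kCylAt z r} with hS
  have hkd : kdist (t₁, x₁, v₁) (t₂, x₂, v₂) = sInf S := rfl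
  -- Step A : every r > N belongs to S
  have memS : ∀ r : ℝ, N < r → r ∈ S := by
    intro r hr
    have hr0 : 0 < r := lt_of_le_of_lt hN0 hr
    have hT : |t₁ - t₂| < r ^ 2 := by
      refine aux_rpow_lt 2 (by norm_num) (abs_nonneg _) ?_
      exact lt_of_le_of_lt (hNval ▸ le_max_left _ _) hr
    have hX : ‖x₁ - x₂ - (t₁ - t₂) • v₂‖ < r ^ 3 := by
      refine aux_rpow_lt 3 (by norm_num) (norm_nonneg _) ?_
      exact lt_of_le_of_lt (hNval ▸ le_trans (le_max_left _ _) (le_max_right _ _)) hr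
    have hV : ‖v₁ - v₂‖ < r := by
      exact lt_of_le_of_lt (hNval ▸ le_trans (le_max_right _ _) (le_max_right _ _)) hr
    have habs := abs_lt.mp hT
    refine ⟨hr0, ?_⟩
    by_cases hc : t₁ ≤ t₂
    · refine ⟨(t₂, x₂, v₂), ⟨(t₁ - t₂, x₁ - x₂ - (t₁ - t₂) • v₂, v₁ - v₂), ?_, ?_⟩,
        ⟨(0, 0, 0), ?_, ?_⟩⟩
      · simp only [kCyl, Set.mem_prod, Set.mem_Ioc, mem_ball_zero_iff]
        exact ⟨⟨by linarith [habs.1], by linarith⟩, hX, hV⟩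
      · simp only [kOp, Prod.mk.injEq]
        exact ⟨by ring, by module, by module⟩
      · simp only [kCyl, Set.mem_prod, Set.mem_Ioc, mem_ball_zero_iff, norm_zero]
        exact ⟨⟨by nlinarith, le_refl 0⟩, by positivity, hr0⟩
      · simp only [kOp, Prod.mk.injEq]
        exact ⟨by ring, by module, by module⟩
    · push_neg at hc
      refine ⟨(t₁, x₂ + (t₁ - t₂) • v₂, v₂),
        ⟨(0, x₁ - x₂ - (t₁ - t₂) • v₂, v₁ - v₂), ?_, ?_⟩,
        ⟨(t₂ - t₁, 0, 0), ?_, ?_⟩⟩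
      · simp only [kCyl, Set.mem_prod, Set.mem_Ioc, mem_ball_zero_iff]
        exact ⟨⟨by nlinarith, le_refl 0⟩, hX, hV⟩
      · simp only [kOp, Prod.mk.injEq]
        exact ⟨by ring, by module, by module⟩
      · simp only [kCyl, Set.mem_prod, Set.mem_Ioc, mem_ball_zero_iff, norm_zero]
        exact ⟨⟨by linarith [habs.2], by linarith⟩, by positivity, hr0⟩
      · simp only [kOp, Prod.mk.injEq]
        exact ⟨by ring, by module, by module⟩
  -- Step B : every r ∈ S satisfies N ≤ 2 r
  have lowS : ∀ r ∈ S, N ≤ 2 * r := by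
    rintro r ⟨hr0, z, ⟨ζ₁, hm1, he1⟩, ⟨ζ₂, hm2, he2⟩⟩
    obtain ⟨s₁, y₁, u₁⟩ := ζ₁
    obtain ⟨s₂, y₂, u₂⟩ := ζ₂
    obtain ⟨tz, xz, vz⟩ := z
    simp only [kOp, Prod.mk.injEq] at he1 he2
    obtain ⟨ht1, hx1, hv1⟩ := he1
    obtain ⟨ht2, hx2, hv2⟩ := he2
    simp only [kCyl, Set.mem_prod, Set.mem_Ioc, mem_ball_zero_iff] at hm1 hm2
    obtain ⟨⟨hs1a, hs1b⟩, hy1, hu1⟩ := hm1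
    obtain ⟨⟨hs2a, hs2b⟩, hy2, hu2⟩ := hm2
    subst ht1 hx1 hv1 ht2 hx2 hv2
    have hTe : (tz + s₁) - (tz + s₂) = s₁ - s₂ := by ring
    have hXe : (xz + y₁ + s₁ • vz) - (xz + y₂ + s₂ • vz)
        - ((tz + s₁) - (tz + s₂)) • (vz + u₂) = y₁ - y₂ - (s₁ - s₂) • u₂ := by module
    have hVe : (vz + u₁) - (vz + u₂) = u₁ - u₂ := by module
    rw [hNval, hXe, hVe, hTe]
    have h2r : (0:ℝ) ≤ 2 * r := by linarith
    refine max_le ?_ (max_le ?_ ?_)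
    · refine aux_rpow_le 2 (by norm_num) (abs_nonneg _) h2r ?_
      have : |s₁ - s₂| ≤ r ^ 2 := abs_le.mpr ⟨by linarith, by linarith⟩
      nlinarith
    · refine aux_rpow_le 3 (by norm_num) (norm_nonneg _) h2r ?_
      have h1 : ‖y₁ - y₂ - (s₁ - s₂) • u₂‖ ≤ ‖y₁ - y₂‖ + ‖(s₁ - s₂) • u₂‖ :=
        norm_sub_le _ _
      have h2 : ‖y₁ - y₂‖ ≤ ‖y₁‖ + ‖y₂‖ := norm_sub_le _ _
      have h3 : ‖(s₁ - s₂) • u₂‖ = |s₁ - s₂| * ‖u₂‖ := norm_smul _ _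
      have h4 : |s₁ - s₂| ≤ r ^ 2 := abs_le.mpr ⟨by linarith, by linarith⟩
      have h5 : |s₁ - s₂| * ‖u₂‖ ≤ r ^ 2 * r := by
        apply mul_le_mul h4 hu2.le (norm_nonneg _) (by positivity)
      nlinarith
    · have := norm_sub_le u₁ u₂
      linarith
  rw [hkd]
  have hne : S.Nonempty := ⟨N + 1, memS _ (by linarith)⟩
  have hbdd : BddBelow S := ⟨0, fun x hx => le_of_lt hx.1⟩
  constructor
  · refine le_csInf hne fun b hb => ?_
    linarith [lowS b hb]
  · refine le_of_forall_pos_le_add fun ε hε => ?_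
    have := csInf_le hbdd (memS (N + ε) (by linarith))
    linarith
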